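/- arXiv:1905.09385 — 5 statements merged into one kernel-verified Lean document; each statement's English description precedes it below -/
import Mathlib

section
/- Let b₀ > 0. For every ε with 0 < ε < 1 and every positive integer N₀, there exists an integer N ≥ N₀ such that |cos(2b₀·log N) - 1| ≤ ε and |sin(2b₀·log N)| ≤ ε. -/
/-! Rounding `x = exp y` up to the integer `⌈x⌉₊` moves its logarithm by at most `1 / x`, so for large
`y` some `log N` with `N ≥ N₀` lies within any given `δ` of `y`. Taking `y = π k / b₀` for a large
integer `k` puts `2 b₀ log N` within `ε` of `2 π k`, and `cos`, `sin` are `1`-Lipschitz. -/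

open Real Filter

theorem Real.log_natCeil_sub_log_le {x : ℝ} (hx : 0 < x) :
    |log ⌈x⌉₊ - log x| ≤ x⁻¹ := by
  have hceil : x ≤ ⌈x⌉₊ := Nat.le_ceil x
  have hceil_pos : (0 : ℝ) < ⌈x⌉₊ := hx.trans_le hceil
  rw [abs_of_nonneg (sub_nonneg.2 (log_le_log hx hceil)), ← log_div hceil_pos.ne' hx.ne']
  calc log (⌈x⌉₊ / x) ≤ ⌈x⌉₊ / x - 1 := log_le_sub_one_of_pos (by positivity)
    _ ≤ (x + 1) / x - 1 := by gcongr; exact (Nat.ceil_lt_add_one hx.le).le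
    _ = x⁻¹ := by field_simp; ring

theorem eventually_exists_nat_abs_log_sub_le (M : ℕ) {δ : ℝ} (hδ : 0 < δ) :
    ∀ᶠ y in atTop, ∃ N : ℕ, M ≤ N ∧ |log N - y| ≤ δ := by
  filter_upwards [tendsto_exp_atTop.eventually_ge_atTop (max M δ⁻¹)] with y hy
  have hM : (M : ℝ) ≤ exp y := (le_max_left _ _).trans hy
  have hδ' : δ⁻¹ ≤ exp y := (le_max_right _ _).trans hy
  refine ⟨⌈exp y⌉₊, Nat.cast_le.1 (hM.trans (Nat.le_ceil _)), ?_⟩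
  calc |log ⌈exp y⌉₊ - y| = |log ⌈exp y⌉₊ - log (exp y)| := by rw [log_exp]
    _ ≤ (exp y)⁻¹ := log_natCeil_sub_log_le (exp_pos y)
    _ ≤ δ := inv_le_of_inv_le₀ hδ hδ'

theorem cos_close_to_one_along_log (b₀ : ℝ) (hb : 0 < b₀) :
    ∀ ε : ℝ, 0 < ε → ε < 1 → ∀ N₀ : ℕ, 0 < N₀ →
      ∃ N : ℕ, N₀ ≤ N ∧ |Real.cos (2 * b₀ * Real.log N) - 1| ≤ ε ∧
        |Real.sin (2 * b₀ * Real.log N)| ≤ ε := by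
  intro ε hε _ N₀ _
  have hk : Tendsto (fun k : ℕ => (k : ℝ) * (π / b₀)) atTop atTop :=
    tendsto_natCast_atTop_atTop.atTop_mul_const (div_pos pi_pos hb)
  have h2b : 0 < 2 * b₀ := mul_pos two_pos hb
  obtain ⟨k, N, hN₀, hN⟩ :=
    (hk.eventually (eventually_exists_nat_abs_log_sub_le N₀ (div_pos hε h2b))).exists
  have hdist : |2 * b₀ * log N - k * (2 * π)| ≤ ε :=
    calc |2 * b₀ * log N - k * (2 * π)| = |2 * b₀ * (log N - k * (π / b₀))| := by
          congr 1; field_simp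
      _ = 2 * b₀ * |log N - k * (π / b₀)| := by rw [abs_mul, abs_of_pos h2b]
      _ ≤ ε := (le_div_iff₀' h2b).1 hN
  refine ⟨N, hN₀, ?_, ?_⟩
  · simpa using (abs_cos_sub_cos_le (2 * b₀ * log N) (k * (2 * π))).trans hdist
  · simpa [sin_periodic.nat_mul_eq k] using
      (abs_sin_sub_sin_le (2 * b₀ * log N) (k * (2 * π))).trans hdist
end

section
/- Let b₀ > 0. For every ε with 0 < ε < 1 and every positive integer N₀, there exists an integer N ≥ N₀ such that |sin(2b₀·log N) - 1| ≤ ε and |cos(2b₀·log N)| ≤ ε. -/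
open Real

/-- If `|t| ≤ ε ≤ 1`, then `1 - cos t ≤ ε`. -/
lemma aux_one_sub_cos_le {t ε : ℝ} (ht : |t| ≤ ε) (hε1 : ε ≤ 1) :
    1 - Real.cos t ≤ ε := by
  have h1 : Real.sin (t / 2) ^ 2 ≤ (t / 2) ^ 2 := Real.sin_sq_le_sq
  have h2 : Real.cos t = 1 - 2 * Real.sin (t / 2) ^ 2 := by
    have := Real.cos_sq (t / 2)
    have h3 : Real.sin (t / 2) ^ 2 = 1 - Real.cos (t / 2) ^ 2 := by
      have := Real.sin_sq_add_cos_sq (t / 2); linarith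
    rw [h3, this]
    ring_nf
  have hε0 : 0 ≤ ε := le_trans (abs_nonneg t) ht
  have ht2 : t ^ 2 ≤ ε ^ 2 := by
    have := sq_abs t
    nlinarith [abs_nonneg t]
  nlinarith

theorem sin_close_to_one_along_log (b₀ : ℝ) (hb : 0 < b₀) :
    ∀ ε : ℝ, 0 < ε → ε < 1 → ∀ N₀ : ℕ, 0 < N₀ →
      ∃ N : ℕ, N₀ ≤ N ∧ |Real.sin (2 * b₀ * Real.log N) - 1| ≤ ε ∧
        |Real.cos (2 * b₀ * Real.log N)| ≤ ε := by
  intro ε hε hε1 N₀ hN₀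
  have hπ := Real.pi_pos
  have hπ2 : (2:ℝ) < π := by linarith [Real.pi_gt_three]
  have hexp1 : (1:ℝ) < Real.exp (ε / b₀) := by
    rw [Real.one_lt_exp_iff]
    positivity
  have hden : (0:ℝ) < Real.exp (ε / b₀) - 1 := by linarith
  set M : ℝ := max (N₀ : ℝ) (1 / (Real.exp (ε / b₀) - 1)) with hM
  have hMN : (N₀ : ℝ) ≤ M := le_max_left _ _
  have hMd : 1 / (Real.exp (ε / b₀) - 1) ≤ M := le_max_right _ _
  obtain ⟨k, hk⟩ := exists_nat_gt (b₀ * Real.log M / π)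
  set a : ℝ := (π/2 + 2*π*k - ε) / (2*b₀) with ha_def
  have ha_logM : Real.log M < a := by
    have hk' : b₀ * Real.log M < π * k := by
      have := (div_lt_iff₀ hπ).mp hk
      linarith
    have : Real.log M < π * k / b₀ := by
      rw [lt_div_iff₀ hb]; linarith
    have hεπ : ε < π/2 := by linarith
    rw [ha_def]
    rw [lt_div_iff₀ (by linarith : (0:ℝ) < 2*b₀)]
    nlinarith
  have hea : M < Real.exp a := by
    calc M ≤ Real.exp (Real.log M) := Real.le_exp_log M
    _ < Real.exp a := Real.exp_lt_exp.mpr ha_logM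
  set N : ℕ := ⌈Real.exp a⌉₊ with hN
  have hexpa_pos : (0:ℝ) < Real.exp a := Real.exp_pos a
  have hNge : Real.exp a ≤ (N : ℝ) := Nat.le_ceil _
  have hNle : (N : ℝ) ≤ Real.exp a + 1 := by
    have := Nat.ceil_lt_add_one (le_of_lt hexpa_pos)
    linarith
  have hN1 : (1:ℝ) ≤ (N : ℝ) := by
    have : (1:ℝ) ≤ M := le_trans (by exact_mod_cast hN₀) hMN
    linarith
  have hNpos : (0:ℝ) < (N : ℝ) := by linarith
  have hNN₀ : N₀ ≤ N := by
    have : (N₀ : ℝ) ≤ (N : ℝ) := by linarith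
    exact_mod_cast this
  -- upper bound: N ≤ exp (a + ε/b₀)
  have hup : (N : ℝ) ≤ Real.exp (a + ε / b₀) := by
    have h1 : 1 ≤ Real.exp a * (Real.exp (ε / b₀) - 1) := by
      have : 1 / (Real.exp (ε / b₀) - 1) < Real.exp a := lt_of_le_of_lt hMd hea
      rw [div_lt_iff₀ hden] at this
      nlinarith
    rw [Real.exp_add]
    nlinarith
  -- log bounds
  have hlog_lo : a ≤ Real.log N := by
    rw [← Real.log_exp a]
    exact Real.log_le_log (Real.exp_pos a) hNge
  have hlog_hi : Real.log N ≤ a + ε / b₀ := by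
    rw [← Real.log_exp (a + ε / b₀)]
    exact Real.log_le_log hNpos hup
  -- t := 2 b₀ log N - (π/2 + 2πk)
  set θ : ℝ := 2 * b₀ * Real.log N with hθ
  set t : ℝ := θ - (π/2 + 2*π*k) with ht_def
  have h2ba : 2 * b₀ * a = π/2 + 2*π*k - ε := by
    rw [ha_def]; field_simp
  have ht_lo : -ε ≤ t := by
    have h := mul_le_mul_of_nonneg_left hlog_lo (by positivity : (0:ℝ) ≤ 2*b₀)
    rw [ht_def, hθ]; linarith [h2ba ▸ h]
  have ht_hi : t ≤ ε := by
    have h := mul_le_mul_of_nonneg_left hlog_hi (by positivity : (0:ℝ) ≤ 2*b₀)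
    have hbε : 2 * b₀ * (ε / b₀) = 2 * ε := by field_simp
    rw [mul_add, h2ba, hbε] at h
    rw [ht_def, hθ]; linarith
  have htabs : |t| ≤ ε := abs_le.mpr ⟨ht_lo, ht_hi⟩
  have hθeq : θ = (π/2 + t) + k * (2*π) := by rw [ht_def]; ring
  refine ⟨N, hNN₀, ?_, ?_⟩
  · rw [show 2 * b₀ * Real.log N = θ from rfl, hθeq,
      Real.sin_add_nat_mul_two_pi, Real.sin_add, Real.sin_pi_div_two, Real.cos_pi_div_two,
      one_mul, zero_mul, add_zero]
    rw [abs_le]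
    constructor
    · have := aux_one_sub_cos_le htabs (le_of_lt hε1)
      linarith
    · linarith [Real.cos_le_one t]
  · rw [show 2 * b₀ * Real.log N = θ from rfl, hθeq,
      Real.cos_add_nat_mul_two_pi, Real.cos_add, Real.cos_pi_div_two, Real.sin_pi_div_two,
      zero_mul, one_mul, zero_sub, abs_neg]
    exact le_trans Real.abs_sin_le_abs htabs
end

section
/- Let b₀ > 0 and x₀ ∈ [0, 2π]. For every ε with 0 < ε < 1 and every positive integer N₀, there exists an integer N ≥ N₀ such that |cos(2b₀·log N) - cos(x₀)| ≤ ε and |sin(2b₀·log N) - sin(x₀)| ≤ ε. -/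
lemma abs_sin_sub_sin_le' (a b : ℝ) : |Real.sin a - Real.sin b| ≤ |a - b| := by
  rw [Real.sin_sub_sin]
  have h1 : |Real.sin ((a - b) / 2)| ≤ |(a - b) / 2| := Real.abs_sin_le_abs
  have h2 : |Real.cos ((a + b) / 2)| ≤ 1 := Real.abs_cos_le_one _
  rw [abs_mul, abs_mul, abs_two]
  calc 2 * |Real.sin ((a - b) / 2)| * |Real.cos ((a + b) / 2)|
      ≤ 2 * |(a - b) / 2| * 1 := by
        apply mul_le_mul _ h2 (abs_nonneg _) (by positivity)
        exact mul_le_mul_of_nonneg_left h1 (by norm_num)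
    _ = |a - b| := by rw [abs_div, abs_two]; ring

lemma abs_cos_sub_cos_le' (a b : ℝ) : |Real.cos a - Real.cos b| ≤ |a - b| := by
  rw [Real.cos_sub_cos]
  have h1 : |Real.sin ((a - b) / 2)| ≤ |(a - b) / 2| := Real.abs_sin_le_abs
  have h2 : |Real.sin ((a + b) / 2)| ≤ 1 := Real.abs_sin_le_one _
  rw [abs_mul, abs_mul, abs_neg, abs_two]
  calc 2 * |Real.sin ((a + b) / 2)| * |Real.sin ((a - b) / 2)|
      ≤ 2 * 1 * |(a - b) / 2| := by
        apply mul_le_mul _ h1 (abs_nonneg _) (by positivity)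
        exact mul_le_mul_of_nonneg_left h2 (by norm_num)
    _ = |a - b| := by rw [abs_div, abs_two]; ring

theorem log_dense_mod_two_pi (b₀ : ℝ) (hb : 0 < b₀) (x₀ : ℝ)
    (hx₀ : x₀ ∈ Set.Icc 0 (2 * Real.pi)) :
    ∀ ε : ℝ, 0 < ε → ε < 1 → ∀ N₀ : ℕ, 0 < N₀ →
      ∃ N : ℕ, N₀ ≤ N ∧ |Real.cos (2 * b₀ * Real.log N) - Real.cos x₀| ≤ ε ∧
        |Real.sin (2 * b₀ * Real.log N) - Real.sin x₀| ≤ ε := by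
  intro ε hε hε1 N₀ hN₀
  have hπ : 0 < Real.pi := Real.pi_pos
  set t₀ : ℝ := max (Real.log N₀ + 1) (Real.log (2 * b₀ / ε)) with ht₀def
  obtain ⟨k, hk⟩ := exists_nat_ge (2 * b₀ * t₀ / (2 * Real.pi))
  have h2π : (0:ℝ) < 2 * Real.pi := by positivity
  have hk' : 2 * b₀ * t₀ ≤ (k : ℝ) * (2 * Real.pi) := by
    have := (div_le_iff₀ h2π).1 hk
    linarith
  set target : ℝ := x₀ + k * (2 * Real.pi) with htargetdef
  have htarget : 2 * b₀ * t₀ ≤ target := by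
    have hx0 : 0 ≤ x₀ := hx₀.1
    simp only [htargetdef]; linarith
  set t : ℝ := target / (2 * b₀) with htdef
  have h2b : (0:ℝ) < 2 * b₀ := by positivity
  have ht : t₀ ≤ t := by
    rw [htdef, le_div_iff₀ h2b]; linarith
  have htarget_eq : target = 2 * b₀ * t := by
    rw [htdef]; field_simp
  set N : ℕ := ⌈Real.exp t⌉₊ with hNdef
  have hNexp : Real.exp t ≤ (N : ℝ) := Nat.le_ceil _
  have hNlt : (N : ℝ) ≤ Real.exp t + 1 :=
    (Nat.ceil_lt_add_one (Real.exp_pos t).le).le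
  have hN₀R : (N₀ : ℝ) ≤ Real.exp t := by
    have h1 : (N₀ : ℝ) = Real.exp (Real.log N₀) :=
      (Real.exp_log (by exact_mod_cast hN₀)).symm
    rw [h1]
    apply Real.exp_le_exp.2
    have : Real.log N₀ + 1 ≤ t₀ := le_max_left _ _
    linarith
  have hN₀le : N₀ ≤ N := by exact_mod_cast hN₀R.trans hNexp
  have hNpos : 0 < N := lt_of_lt_of_le hN₀ hN₀le
  have hNposR : (0:ℝ) < (N : ℝ) := by exact_mod_cast hNpos
  have hlog_ge : t ≤ Real.log N := (Real.le_log_iff_exp_le hNposR).2 hNexp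
  have hlog_le : Real.log N ≤ t + Real.exp (-t) := by
    have h1 : Real.log N ≤ Real.log (Real.exp t + 1) :=
      Real.log_le_log hNposR hNlt
    have h2 : Real.exp t + 1 = Real.exp t * (1 + Real.exp (-t)) := by
      rw [mul_add, mul_one, ← Real.exp_add]; simp
    have h3 : Real.log (Real.exp t + 1) = t + Real.log (1 + Real.exp (-t)) := by
      rw [h2, Real.log_mul (Real.exp_ne_zero t) (by positivity), Real.log_exp]
    have h4 : Real.log (1 + Real.exp (-t)) ≤ Real.exp (-t) := by
      have := Real.log_le_sub_one_of_pos (x := 1 + Real.exp (-t)) (by positivity)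
      linarith
    linarith
  have hexp_small : Real.exp (-t) ≤ ε / (2 * b₀) := by
    have h1 : Real.log (2 * b₀ / ε) ≤ t := (le_max_right _ _).trans ht
    have h2 : Real.exp (-t) ≤ Real.exp (-(Real.log (2 * b₀ / ε))) :=
      Real.exp_le_exp.2 (by linarith)
    have h3 : Real.exp (-(Real.log (2 * b₀ / ε))) = ε / (2 * b₀) := by
      rw [Real.exp_neg, Real.exp_log (by positivity)]
      field_simp
    linarith [h2, h3.le, h3.ge]
  have herr : |2 * b₀ * Real.log N - target| ≤ ε := by
    have heq : 2 * b₀ * (ε / (2 * b₀)) = ε := by field_simp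
    have h5 := mul_le_mul_of_nonneg_left hexp_small h2b.le
    have h6 := mul_le_mul_of_nonneg_left hlog_le h2b.le
    have h7 := mul_le_mul_of_nonneg_left hlog_ge h2b.le
    rw [htarget_eq, abs_le]
    constructor <;> nlinarith
  refine ⟨N, hN₀le, ?_, ?_⟩
  · have hc : Real.cos target = Real.cos x₀ := by
      rw [htargetdef]; exact Real.cos_add_nat_mul_two_pi x₀ k
    rw [← hc]
    exact (abs_cos_sub_cos_le' (2 * b₀ * Real.log N) target).trans herr
  · have hs : Real.sin target = Real.sin x₀ := by
      rw [htargetdef]; exact Real.sin_add_nat_mul_two_pi x₀ k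
    rw [← hs]
    exact (abs_sin_sub_sin_le' (2 * b₀ * Real.log N) target).trans herr
end

section
/- Let 1/2 < a₀ ≤ 1 and b₀ > 0, and for an even integer N ≥ 2 define Ū_n = (cos(b₀ log n) - 2^{1-a₀}·cos(b₀ log(2n)))/n^{a₀} for n ≤ N/2 and Ū_n = cos(b₀ log n)/n^{a₀} for N/2 < n ≤ N, and similarly V̄_n with sin in place of cos. Then ∑_{n=1}^{N} (Ū_n² + V̄_n²) = ∑_{n=1}^{N} 1/n^{2a₀} + (2^{2-2a₀} - 2^{2-a₀}·cos(b₀ log 2)) · ∑_{n=1}^{N/2} 1/n^{2a₀}. -/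
/-!
Write `θ = b₀ log n` and `φ = b₀ log 2`, so that `b₀ log (2n) = θ + φ`. For `n > N/2` the term
is `(cos² θ + sin² θ) / n^{2a₀} = 1 / n^{2a₀}`. For `n ≤ N/2` the numerator is
`|e^{iθ} - r e^{i(θ+φ)}|² = |1 - r e^{iφ}|² = 1 - 2r cos φ + r²` with `r = 2^{1-a₀}`,
which is independent of `n`; splitting the sum at `N/2` gives the identity.
-/

open Real Finset

theorem cos_sub_mul_cos_add_sq_add_sin_sub_mul_sin_add_sq (θ φ r : ℝ) :
    (cos θ - r * cos (θ + φ)) ^ 2 + (sin θ - r * sin (θ + φ)) ^ 2 =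
      1 - 2 * r * cos φ + r ^ 2 := by
  have hφ : cos φ = cos (θ + φ) * cos θ + sin (θ + φ) * sin θ := by
    rw [← cos_sub, add_sub_cancel_left]
  rw [hφ]
  linear_combination sin_sq_add_cos_sq θ + r ^ 2 * sin_sq_add_cos_sq (θ + φ)

theorem div_rpow_sq_add_div_rpow_sq {x : ℝ} (hx : 0 ≤ x) (a p q : ℝ) :
    (p / x ^ a) ^ 2 + (q / x ^ a) ^ 2 = (p ^ 2 + q ^ 2) / x ^ (2 * a) := by
  rw [div_pow, div_pow, ← add_div, ← rpow_mul_natCast hx, mul_comm, Nat.cast_two]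

theorem twisted_sq_add_sq {x : ℝ} (hx : 0 < x) (a b : ℝ) :
    ((cos (b * log x) - 2 ^ (1 - a) * cos (b * log (2 * x))) / x ^ a) ^ 2 +
        ((sin (b * log x) - 2 ^ (1 - a) * sin (b * log (2 * x))) / x ^ a) ^ 2 =
      (1 + ((2 : ℝ) ^ (2 - 2 * a) - 2 ^ (2 - a) * cos (b * log 2))) / x ^ (2 * a) := by
  have hlog : b * log (2 * x) = b * log x + b * log 2 := by
    rw [log_mul two_ne_zero hx.ne', mul_add, add_comm]
  have hsq : ((2 : ℝ) ^ (1 - a)) ^ 2 = 2 ^ (2 - 2 * a) := by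
    rw [← rpow_mul_natCast zero_le_two]
    ring_nf
  have hdouble : (2 : ℝ) ^ (2 - a) = 2 * 2 ^ (1 - a) := by
    rw [show 2 - a = 1 + (1 - a) by ring, rpow_add two_pos, rpow_one]
  rw [div_rpow_sq_add_div_rpow_sq hx.le, hlog,
    cos_sub_mul_cos_add_sq_add_sin_sub_mul_sin_add_sq, hsq, hdouble]
  ring_nf

theorem sum_Icc_one_eq_add_sum_Ioc {M : Type*} [AddCommMonoid M] (f : ℕ → M) {m n : ℕ}
    (hmn : m ≤ n) : ∑ k ∈ Icc 1 n, f k = ∑ k ∈ Icc 1 m, f k + ∑ k ∈ Ioc m n, f k := by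
  rw [← zero_add 1, Icc_add_one_left_eq_Ioc, Icc_add_one_left_eq_Ioc]
  exact (sum_Ioc_consecutive f m.zero_le hmn).symm

theorem sum_of_squares_twisted_general (a₀ b₀ : ℝ)
    (N : ℕ)
    (U V : ℕ → ℝ)
    (hU : ∀ n : ℕ, (n ≤ N / 2 →
        U n = (Real.cos (b₀ * Real.log n) - 2 ^ (1 - a₀) * Real.cos (b₀ * Real.log (2 * n))) /
          (n : ℝ) ^ a₀) ∧
      (N / 2 < n → U n = Real.cos (b₀ * Real.log n) / (n : ℝ) ^ a₀))
    (hV : ∀ n : ℕ, (n ≤ N / 2 →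
        V n = (Real.sin (b₀ * Real.log n) - 2 ^ (1 - a₀) * Real.sin (b₀ * Real.log (2 * n))) /
          (n : ℝ) ^ a₀) ∧
      (N / 2 < n → V n = Real.sin (b₀ * Real.log n) / (n : ℝ) ^ a₀)) :
    ∑ n ∈ Finset.Icc 1 N, ((U n) ^ 2 + (V n) ^ 2) =
      ∑ n ∈ Finset.Icc 1 N, 1 / (n : ℝ) ^ (2 * a₀) +
        ((2 : ℝ) ^ (2 - 2 * a₀) - 2 ^ (2 - a₀) * Real.cos (b₀ * Real.log 2)) *
          ∑ n ∈ Finset.Icc 1 (N / 2), 1 / (n : ℝ) ^ (2 * a₀) := by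
  set C : ℝ := (2 : ℝ) ^ (2 - 2 * a₀) - 2 ^ (2 - a₀) * cos (b₀ * log 2)
  have hlow : ∀ n ∈ Icc 1 (N / 2),
      U n ^ 2 + V n ^ 2 = 1 / (n : ℝ) ^ (2 * a₀) + C * (1 / (n : ℝ) ^ (2 * a₀)) := by
    intro n hn
    obtain ⟨hn_pos, hn_le⟩ := mem_Icc.mp hn
    rw [(hU n).1 hn_le, (hV n).1 hn_le, twisted_sq_add_sq (by exact_mod_cast hn_pos)]
    ring
  have hhigh : ∀ n ∈ Ioc (N / 2) N, U n ^ 2 + V n ^ 2 = 1 / (n : ℝ) ^ (2 * a₀) := by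
    intro n hn
    have hn_gt := (mem_Ioc.mp hn).1
    rw [(hU n).2 hn_gt, (hV n).2 hn_gt, div_rpow_sq_add_div_rpow_sq n.cast_nonneg,
      cos_sq_add_sin_sq]
  have hhalf : N / 2 ≤ N := Nat.div_le_self N 2
  rw [sum_Icc_one_eq_add_sum_Ioc _ hhalf, sum_Icc_one_eq_add_sum_Ioc _ hhalf, sum_congr rfl hlow,
    sum_congr rfl hhigh, sum_add_distrib, ← mul_sum]
  ring

theorem sum_of_squares_twisted (a₀ b₀ : ℝ) (ha : 1 / 2 < a₀) (ha' : a₀ ≤ 1) (hb : 0 < b₀)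
    (N : ℕ) (hN : 2 ≤ N) (hEven : Even N)
    (U V : ℕ → ℝ)
    (hU : ∀ n : ℕ, (n ≤ N / 2 →
        U n = (Real.cos (b₀ * Real.log n) - 2 ^ (1 - a₀) * Real.cos (b₀ * Real.log (2 * n))) /
          (n : ℝ) ^ a₀) ∧
      (N / 2 < n → U n = Real.cos (b₀ * Real.log n) / (n : ℝ) ^ a₀))
    (hV : ∀ n : ℕ, (n ≤ N / 2 →
        V n = (Real.sin (b₀ * Real.log n) - 2 ^ (1 - a₀) * Real.sin (b₀ * Real.log (2 * n))) /
          (n : ℝ) ^ a₀) ∧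
      (N / 2 < n → V n = Real.sin (b₀ * Real.log n) / (n : ℝ) ^ a₀)) :
    ∑ n ∈ Finset.Icc 1 N, ((U n) ^ 2 + (V n) ^ 2) =
      ∑ n ∈ Finset.Icc 1 N, 1 / (n : ℝ) ^ (2 * a₀) +
        ((2 : ℝ) ^ (2 - 2 * a₀) - 2 ^ (2 - a₀) * Real.cos (b₀ * Real.log 2)) *
          ∑ n ∈ Finset.Icc 1 (N / 2), 1 / (n : ℝ) ^ (2 * a₀) :=
  sum_of_squares_twisted_general a₀ b₀ N U V hU hV
end

section
/- Let a₀ > 0 and b₀ > 0. Then as n → ∞, sin(b₀·log(n+1))/(n+1)^{a₀} = sin(b₀·log n)/n^{a₀} + (b₀·cos(b₀·log n) - a₀·sin(b₀·log n))/n^{a₀+1} + O(1/n^{a₀+2}). -/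
/-!
Put `f x = sin (b log x) / x ^ a`. The functions `(p sin (b log x) + q cos (b log x)) / x ^ a`
form a family closed under differentiation, with `a` raised by one at each step. Hence `f'` is
the stated first-order coefficient and `|f''| ≤ C / n ^ (a + 2)` on `[n, n + 1]`, and the
first-order Taylor estimate on that interval (the mean value theorem applied twice) gives the
error bound.
-/

open Real Set

theorem abs_sub_sub_mul_le_of_hasDerivAt_of_abs_le {f g g' : ℝ → ℝ} {a b K : ℝ} (hab : a ≤ b)
    (hf : ∀ x ∈ Icc a b, HasDerivAt f (g x) x) (hg : ∀ x ∈ Icc a b, HasDerivAt g (g' x) x)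
    (hK : ∀ x ∈ Icc a b, |g' x| ≤ K) :
    |f b - f a - g a * (b - a)| ≤ K * (b - a) ^ 2 := by
  have ha : a ∈ Icc a b := left_mem_Icc.2 hab
  have hb : b ∈ Icc a b := right_mem_Icc.2 hab
  have hK0 : 0 ≤ K := (abs_nonneg _).trans (hK a ha)
  have hg_var : ∀ x ∈ Icc a b, |g x - g a| ≤ K * (b - a) := fun x hx => by
    have := Convex.norm_image_sub_le_of_norm_hasDerivWithin_le
      (fun y hy => (hg y hy).hasDerivWithinAt) hK (convex_Icc a b) ha hx
    rw [Real.norm_eq_abs, Real.norm_eq_abs, abs_of_nonneg (sub_nonneg.2 hx.1)] at this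
    exact this.trans (mul_le_mul_of_nonneg_left (by linarith [hx.2]) hK0)
  -- the mean value theorem again, for `x ↦ f x - g a * x`
  have := Convex.norm_image_sub_le_of_norm_hasDerivWithin_le (f := fun x => f x - g a * x)
    (fun x hx => (((hf x hx).sub ((hasDerivAt_id x).const_mul (g a))).hasDerivWithinAt).congr_deriv
      (by simp)) hg_var (convex_Icc a b) ha hb
  rw [Real.norm_eq_abs, Real.norm_eq_abs, abs_of_nonneg (sub_nonneg.2 hab)] at this
  calc |f b - f a - g a * (b - a)| = |f b - g a * b - (f a - g a * a)| := by ring_nf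
    _ ≤ K * (b - a) ^ 2 := by nlinarith [this]

noncomputable def logOscillation (a b p q x : ℝ) : ℝ :=
  (p * sin (b * log x) + q * cos (b * log x)) / x ^ a

theorem hasDerivAt_logOscillation (a b p q : ℝ) {x : ℝ} (hx : 0 < x) :
    HasDerivAt (logOscillation a b p q)
      (logOscillation (a + 1) b (-a * p - b * q) (b * p - a * q) x) x := by
  have hxa : 0 < x ^ a := rpow_pos_of_pos hx a
  have hlog : HasDerivAt (fun x => b * log x) (b * x⁻¹) x := (hasDerivAt_log hx.ne').const_mul b
  have h := ((hlog.sin.const_mul p).add (hlog.cos.const_mul q)).div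
    (hasDerivAt_rpow_const (p := a) (Or.inl hx.ne')) hxa.ne'
  refine h.congr_deriv ?_
  simp only [logOscillation, Pi.add_apply, rpow_add hx, rpow_sub hx, rpow_one]
  field_simp
  ring

theorem abs_logOscillation_le (a b p q : ℝ) {x : ℝ} (hx : 0 < x) :
    |logOscillation a b p q x| ≤ (|p| + |q|) / x ^ a := by
  have hxa : 0 < x ^ a := rpow_pos_of_pos hx a
  rw [logOscillation, abs_div, abs_of_pos hxa]
  gcongr
  calc |p * sin (b * log x) + q * cos (b * log x)|
      ≤ |p| * |sin (b * log x)| + |q| * |cos (b * log x)| := by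
        simpa only [abs_mul] using abs_add_le (p * sin (b * log x)) (q * cos (b * log x))
    _ ≤ |p| * 1 + |q| * 1 := by gcongr <;> simp only [abs_sin_le_one, abs_cos_le_one]
    _ = |p| + |q| := by ring

theorem abs_logOscillation_le_of_le (a b p q : ℝ) {x y : ℝ} (hy : 0 < y) (hyx : y ≤ x)
    (ha : 0 ≤ a) : |logOscillation a b p q x| ≤ (|p| + |q|) / y ^ a :=
  (abs_logOscillation_le a b p q (hy.trans_le hyx)).trans <| by gcongr

theorem asymptotic_expansion_sin_general (a₀ b₀ : ℝ) (ha : 0 < a₀) :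
    ∃ C : ℝ, ∃ N₀ : ℕ, ∀ n : ℕ, N₀ ≤ n →
      |Real.sin (b₀ * Real.log ((n : ℝ) + 1)) / ((n : ℝ) + 1) ^ a₀ -
          (Real.sin (b₀ * Real.log n) / (n : ℝ) ^ a₀ +
            (b₀ * Real.cos (b₀ * Real.log n) - a₀ * Real.sin (b₀ * Real.log n)) /
              (n : ℝ) ^ (a₀ + 1))| ≤
        C / (n : ℝ) ^ (a₀ + 2) := by
  refine ⟨|a₀ * (a₀ + 1) - b₀ ^ 2| + |(2 * a₀ + 1) * b₀|, 1, fun n hn => ?_⟩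
  have hn_pos : (0 : ℝ) < n := by exact_mod_cast hn
  have key := abs_sub_sub_mul_le_of_hasDerivAt_of_abs_le (f := logOscillation a₀ b₀ 1 0)
    (le_add_of_nonneg_right zero_le_one : (n : ℝ) ≤ n + 1)
    (fun x hx => hasDerivAt_logOscillation _ _ _ _ (hn_pos.trans_le hx.1))
    (fun x hx => hasDerivAt_logOscillation _ _ _ _ (hn_pos.trans_le hx.1))
    (fun x hx => abs_logOscillation_le_of_le _ _ _ _ hn_pos hx.1 (by linarith))
  convert key using 2
  · simp only [logOscillation]
    ring
  · rw [← abs_neg ((2 * a₀ + 1) * b₀)]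
    ring_nf

theorem asymptotic_expansion_sin (a₀ b₀ : ℝ) (ha : 0 < a₀) (hb : 0 < b₀) :
    ∃ C : ℝ, ∃ N₀ : ℕ, ∀ n : ℕ, N₀ ≤ n →
      |Real.sin (b₀ * Real.log ((n : ℝ) + 1)) / ((n : ℝ) + 1) ^ a₀ -
          (Real.sin (b₀ * Real.log n) / (n : ℝ) ^ a₀ +
            (b₀ * Real.cos (b₀ * Real.log n) - a₀ * Real.sin (b₀ * Real.log n)) /
              (n : ℝ) ^ (a₀ + 1))| ≤
        C / (n : ℝ) ^ (a₀ + 2) :=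
  asymptotic_expansion_sin_general a₀ b₀ ha
end
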